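/- Let β ≤ −1. Define, for measurable f ≥ 0 and x > 0, N₁^β f(x) = ∫_0^∞ χ_{{y < x/2 or y > 2x}} [ (xy)^{−2β} sup_{0<s≤1/4} (1−s)^{−2β} K_s^{−β}(x,y) ] f(y) dν_β(y). Then there is a constant C (depending only on β) such that ∫_0^∞ N₁^β f(x) dν_β(x) ≤ C ∫_0^∞ f(y) dν_β(y) for every 0 ≤ f ∈ L¹(dν_β); i.e. N₁^β is of strong type (1,1) with respect to ν_β. -/

import Mathlib

open MeasureTheory

/-- In dimension one, the measure `ν_β` on `(0,∞)` with density `x^{2β+1} e^{−x²}`. -/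
noncomputable def nu1 (β : ℝ) : Measure ℝ :=
  ((volume : Measure ℝ).withDensity fun x =>
    ENNReal.ofReal (x ^ (2 * β + 1) * Real.exp (-x ^ 2))).restrict (Set.Ioi 0)

/-- The one-dimensional kernel
`K_s^γ(x,y) = s^{−1/2} (x + √s)^{−2γ−1} exp(x² − ((1+s)x − (1−s)y)²/(8s))`. -/
noncomputable def Kker1 (γ s x y : ℝ) : ℝ :=
  s ^ (-(1 : ℝ) / 2) * (x + Real.sqrt s) ^ (-(2 * γ + 1)) *
    Real.exp (x ^ 2 - ((1 + s) * x - (1 - s) * y) ^ 2 / (8 * s))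

/-!
For `y ∉ [x/2, 2x]` and `s ≤ 1/4` one has `|(1+s)x - (1-s)y| ≥ max(x,y)/8`, so the Gaussian factor
of `K_s^{-β}` beats its singularity `s^{-(1-β)}`: from `s^{-p} e^{-a/s} ≤ (p/a)^p` the kernel of
`N₁^β` is at most a constant times `(xy)^{-2β} max(x,y)^{2β-2} e^{x²}`. The factor `e^{x²}` cancels
the Gaussian weight of `ν_β`, and what remains integrates in `x` against `ν_β` to
`1/2 - 1/(2β)` for every `y`, so Tonelli gives the `L¹(ν_β)` bound.
-/

open Set Real
open scoped ENNReal

theorem rpow_neg_mul_exp_neg_div_le {p a s : ℝ} (hp : 0 < p) (ha : 0 < a) (hs : 0 < s) :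
    s ^ (-p) * exp (-(a / s)) ≤ (p / a) ^ p := by
  have ht : 0 < a / (p * s) := by positivity
  have hsplit : s ^ (-p) = (p / a) ^ p * (a / (p * s)) ^ p := by
    rw [← mul_rpow (by positivity) ht.le, rpow_neg hs.le, ← inv_rpow hs.le]
    congr 1
    field_simp
  have htp : (a / (p * s)) ^ p ≤ exp (a / s) := calc
    _ ≤ exp (a / (p * s)) ^ p :=
      rpow_le_rpow ht.le (by linarith [add_one_le_exp (a / (p * s))]) hp.le
    _ = exp (a / s) := by rw [← exp_mul]; field_simp
  rw [hsplit, mul_assoc]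
  refine mul_le_of_le_one_right (by positivity) ?_
  rw [exp_neg, ← div_eq_mul_inv]
  exact div_le_one_of_le₀ htp (exp_pos _).le

theorem sq_max_div_le_sq_of_far {s x y : ℝ} (hs : 0 ≤ s) (hs' : s ≤ 1 / 4) (hx : 0 < x)
    (hy : 0 < y) (hfar : y < x / 2 ∨ 2 * x < y) :
    max x y ^ 2 / 64 ≤ ((1 + s) * x - (1 - s) * y) ^ 2 := by
  rcases hfar with h | h
  · rw [max_eq_left (by linarith)]
    nlinarith [mul_nonneg hs (add_pos hx hy).le]
  · rw [max_eq_right (by linarith)]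
    nlinarith [mul_le_mul_of_nonneg_right hs' (add_pos hx hy).le]

theorem Kker1_le_of_far {γ s x y : ℝ} (hγ : -1 / 2 ≤ γ) (hs : 0 < s) (hs' : s ≤ 1 / 4)
    (hx : 0 < x) (hy : 0 < y) (hfar : y < x / 2 ∨ 2 * x < y) :
    Kker1 γ s x y ≤ (512 * (1 + γ)) ^ (1 + γ) * max x y ^ (-2 * (1 + γ)) * exp (x ^ 2) := by
  set m := max x y
  have hm : 0 < m := lt_max_of_lt_left hx
  have hp : 0 < 1 + γ := by linarith
  have hsqrt : 0 < √s := sqrt_pos.2 hs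
  have hpow : s ^ (-(1 : ℝ) / 2) * (x + √s) ^ (-(2 * γ + 1)) ≤ s ^ (-(1 + γ)) := calc
    _ ≤ s ^ (-(1 : ℝ) / 2) * √s ^ (-(2 * γ + 1)) := by
      refine mul_le_mul_of_nonneg_left ?_ (by positivity)
      exact rpow_le_rpow_of_nonpos hsqrt (by linarith) (by linarith)
    _ = s ^ (-(1 + γ)) := by
      rw [sqrt_eq_rpow, ← rpow_mul hs.le, ← rpow_add hs]
      ring_nf
  have hexp : exp (x ^ 2 - ((1 + s) * x - (1 - s) * y) ^ 2 / (8 * s)) ≤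
      exp (-(m ^ 2 / 512 / s)) * exp (x ^ 2) := by
    rw [← exp_add, exp_le_exp]
    have := div_le_div_of_nonneg_right (sq_max_div_le_sq_of_far hs.le hs' hx hy hfar)
      (by positivity : (0 : ℝ) ≤ 8 * s)
    have e : m ^ 2 / 64 / (8 * s) = m ^ 2 / 512 / s := by field_simp; ring
    linarith
  calc Kker1 γ s x y ≤ s ^ (-(1 + γ)) * (exp (-(m ^ 2 / 512 / s)) * exp (x ^ 2)) :=
        mul_le_mul hpow hexp (exp_pos _).le (by positivity)
    _ = (s ^ (-(1 + γ)) * exp (-(m ^ 2 / 512 / s))) * exp (x ^ 2) := by ring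
    _ ≤ ((1 + γ) / (m ^ 2 / 512)) ^ (1 + γ) * exp (x ^ 2) := by
      gcongr
      exact rpow_neg_mul_exp_neg_div_le hp (by positivity) hs
    _ = (512 * (1 + γ)) ^ (1 + γ) * m ^ (-2 * (1 + γ)) * exp (x ^ 2) := by
      rw [show (1 + γ) / (m ^ 2 / 512) = 512 * (1 + γ) * (m ^ 2)⁻¹ by field_simp,
        mul_rpow (by positivity) (by positivity), inv_rpow (by positivity),
        ← rpow_neg (by positivity), ← rpow_natCast, ← rpow_mul hm.le]
      push_cast
      ring_nf

noncomputable def farMajorant (β x y : ℝ) : ℝ :=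
  if y < x / 2 ∨ 2 * x < y then (x * y) ^ (-2 * β) * max x y ^ (2 * β - 2) * exp (x ^ 2) else 0

theorem measurable_farMajorant (β : ℝ) : Measurable (Function.uncurry (farMajorant β)) := by
  refine Measurable.ite (p := fun q : ℝ × ℝ => q.2 < q.1 / 2 ∨ 2 * q.1 < q.2) ?_ (by fun_prop)
    measurable_const
  exact (measurableSet_lt measurable_snd (measurable_fst.div_const 2)).union
    (measurableSet_lt (measurable_fst.const_mul 2) measurable_snd)

theorem lintegral_lintegral_mul_le_of_lintegral_le {α β : Type*} [MeasurableSpace α]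
    [MeasurableSpace β] {μ : Measure α} {ν : Measure β} [SFinite μ] [SFinite ν]
    {k : α → β → ℝ≥0∞} {g : β → ℝ≥0∞} {C : ℝ≥0∞} (hk : Measurable (Function.uncurry k))
    (hg : AEMeasurable g ν) (hC : ∀ᵐ y ∂ν, ∫⁻ x, k x y ∂μ ≤ C) :
    ∫⁻ x, ∫⁻ y, k x y * g y ∂ν ∂μ ≤ C * ∫⁻ y, g y ∂ν := by
  rw [lintegral_lintegral_swap (hk.aemeasurable.mul hg.comp_snd)]
  calc ∫⁻ y, ∫⁻ x, k x y * g y ∂μ ∂ν = ∫⁻ y, (∫⁻ x, k x y ∂μ) * g y ∂ν := by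
        congr 1 with y
        exact lintegral_mul_const _ (hk.comp measurable_prodMk_right)
    _ ≤ ∫⁻ y, C * g y ∂ν := lintegral_mono_ae (hC.mono fun y hy => by gcongr)
    _ = C * ∫⁻ y, g y ∂ν := lintegral_const_mul'' C hg

theorem ae_nu1_pos (β : ℝ) : ∀ᵐ x ∂nu1 β, 0 < x :=
  ae_restrict_mem measurableSet_Ioi

instance (β : ℝ) : SFinite (nu1 β) := by
  unfold nu1
  infer_instance

theorem lintegral_Ioi_mul_max_rpow {β y : ℝ} (hβ : β < 0) (hy : 0 < y) :
    ∫⁻ x in Ioi 0, ENNReal.ofReal (x * y ^ (-2 * β) * max x y ^ (2 * β - 2)) =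
      ENNReal.ofReal (1 / 2 - 1 / (2 * β)) := by
  rw [← Ioc_union_Ioi_eq_Ioi hy.le, lintegral_union measurableSet_Ioi Ioc_disjoint_Ioi_same]
  have hIoc : ∫⁻ x in Ioc 0 y, ENNReal.ofReal (x * y ^ (-2 * β) * max x y ^ (2 * β - 2)) =
      ENNReal.ofReal (1 / 2) := by
    rw [setLIntegral_congr_fun measurableSet_Ioc (g := fun x => ENNReal.ofReal (x / y ^ 2))
      fun x hx => by
        rw [max_eq_right hx.2, mul_assoc, ← rpow_add hy, show -2 * β + (2 * β - 2) = -2 by ring,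
          rpow_neg hy.le, rpow_two, ← div_eq_mul_inv]]
    rw [← ofReal_integral_eq_lintegral_ofReal, ← intervalIntegral.integral_of_le hy.le,
      intervalIntegral.integral_div, integral_id]
    · rw [zero_pow two_ne_zero, sub_zero]
      field_simp
    · exact (continuous_id.div_const _).integrableOn_Ioc
    · exact (ae_restrict_iff' measurableSet_Ioc).2 (ae_of_all _ fun x hx => by
        have := hx.1; positivity)
  have hIoi : ∫⁻ x in Ioi y, ENNReal.ofReal (x * y ^ (-2 * β) * max x y ^ (2 * β - 2)) =
      ENNReal.ofReal (-1 / (2 * β)) := by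
    rw [setLIntegral_congr_fun measurableSet_Ioi
      (g := fun x => ENNReal.ofReal (y ^ (-2 * β) * x ^ (2 * β - 1)))
      fun x hx => by
        have hx0 : 0 < x := hy.trans hx
        rw [max_eq_left hx.le, mul_comm x, mul_assoc, ← rpow_one_add' hx0.le (by linarith)]
        ring_nf]
    rw [← ofReal_integral_eq_lintegral_ofReal, integral_const_mul,
      integral_Ioi_rpow_of_lt (by linarith) hy, ← mul_div_assoc, mul_neg, ← rpow_add hy]
    · rw [show -2 * β + (2 * β - 1 + 1) = 0 by ring, rpow_zero, show 2 * β - 1 + 1 = 2 * β by ring]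
    · exact (integrableOn_Ioi_rpow_of_lt (by linarith) hy).const_mul _
    · exact (ae_restrict_iff' measurableSet_Ioi).2 (ae_of_all _ fun x hx => by
        have := hy.trans hx; positivity)
  rw [hIoc, hIoi, ← ENNReal.ofReal_add (by norm_num)
    (div_nonneg_of_nonpos (by norm_num) (by linarith))]
  congr 1
  ring

theorem density_mul_farMajorant_le {β x y : ℝ} (hx : 0 < x) (hy : 0 < y) :
    x ^ (2 * β + 1) * exp (-x ^ 2) * farMajorant β x y ≤
      x * y ^ (-2 * β) * max x y ^ (2 * β - 2) := by
  unfold farMajorant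
  split_ifs
  · rw [mul_rpow hx.le hy.le]
    have hx1 : x ^ (2 * β + 1) * x ^ (-2 * β) = x := by
      rw [← rpow_add hx, show 2 * β + 1 + -2 * β = 1 by ring, rpow_one]
    have he : exp (-x ^ 2) * exp (x ^ 2) = 1 := by rw [← exp_add]; simp
    refine le_of_eq ?_
    calc _ = (x ^ (2 * β + 1) * x ^ (-2 * β)) * y ^ (-2 * β) * max x y ^ (2 * β - 2) *
          (exp (-x ^ 2) * exp (x ^ 2)) := by ring
      _ = _ := by rw [hx1, he, mul_one]
  · rw [mul_zero]
    positivity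

theorem lintegral_farMajorant_le {β y : ℝ} (hβ : β < 0) (hy : 0 < y) :
    ∫⁻ x, ENNReal.ofReal (farMajorant β x y) ∂nu1 β ≤ ENNReal.ofReal (1 / 2 - 1 / (2 * β)) := by
  have hm : Measurable fun x => ENNReal.ofReal (farMajorant β x y) :=
    ((measurable_farMajorant β).comp measurable_prodMk_right).ennreal_ofReal
  rw [nu1, setLIntegral_withDensity_eq_setLIntegral_mul _ (by fun_prop) hm measurableSet_Ioi,
    ← lintegral_Ioi_mul_max_rpow hβ hy]
  refine setLIntegral_mono (by fun_prop) fun x (hx : 0 < x) => ?_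
  rw [Pi.mul_apply, ← ENNReal.ofReal_mul (by positivity)]
  exact ENNReal.ofReal_le_ofReal (density_mul_farMajorant_le hx hy)

theorem mul_iSup_Kker1_le {β x y : ℝ} (hβ : β ≤ 0) (hx : 0 < x) (hy : 0 < y)
    (hfar : y < x / 2 ∨ 2 * x < y) :
    ENNReal.ofReal ((x * y) ^ (-2 * β)) *
        ⨆ s ∈ Ioc (0 : ℝ) (1 / 4), ENNReal.ofReal ((1 - s) ^ (-2 * β) * Kker1 (-β) s x y) ≤
      ENNReal.ofReal ((512 * (1 - β)) ^ (1 - β) * farMajorant β x y) := by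
  rw [farMajorant, if_pos hfar,
    show (512 * (1 - β)) ^ (1 - β) * ((x * y) ^ (-2 * β) * max x y ^ (2 * β - 2) * exp (x ^ 2)) =
      (x * y) ^ (-2 * β) * ((512 * (1 - β)) ^ (1 - β) * max x y ^ (2 * β - 2) * exp (x ^ 2))
      by ring, ENNReal.ofReal_mul (by positivity)]
  gcongr
  refine iSup₂_le fun s ⟨hs, hs'⟩ => ENNReal.ofReal_le_ofReal ?_
  have hK := Kker1_le_of_far (γ := -β) (by linarith) hs hs' hx hy hfar
  rw [← sub_eq_add_neg, show -2 * (1 - β) = 2 * β - 2 by ring] at hK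
  have h1s : (1 - s) ^ (-2 * β) ≤ 1 := rpow_le_one (by linarith) (by linarith) (by linarith)
  have hK0 : 0 ≤ Kker1 (-β) s x y := by unfold Kker1; positivity
  exact (mul_le_of_le_one_left hK0 h1s).trans hK

theorem setLIntegral_far_le {β x : ℝ} (hβ : β ≤ 0) (hx : 0 < x) (g : ℝ → ℝ≥0∞) :
    ∫⁻ y in {y : ℝ | y < x / 2 ∨ 2 * x < y},
        ENNReal.ofReal ((x * y) ^ (-2 * β)) *
          (⨆ s ∈ Ioc (0 : ℝ) (1 / 4), ENNReal.ofReal ((1 - s) ^ (-2 * β) * Kker1 (-β) s x y)) *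
          g y ∂nu1 β ≤
      ∫⁻ y, ENNReal.ofReal ((512 * (1 - β)) ^ (1 - β) * farMajorant β x y) * g y ∂nu1 β := by
  have hS : MeasurableSet {y : ℝ | y < x / 2 ∨ 2 * x < y} :=
    measurableSet_Iio.union measurableSet_Ioi
  rw [← lintegral_indicator hS]
  refine lintegral_mono_ae ((ae_nu1_pos β).mono fun y hy => ?_)
  by_cases hfar : y ∈ {y : ℝ | y < x / 2 ∨ 2 * x < y}
  · rw [indicator_of_mem hfar]
    gcongr
    exact mul_iSup_Kker1_le hβ hx hy hfar
  · rw [indicator_of_notMem hfar]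
    exact zero_le

/-- For `β ≤ −1`, the operator
`N₁^β f(x) = ∫₀^∞ χ_{{y<x/2 or y>2x}} [(xy)^{−2β} sup_{0<s≤1/4} (1−s)^{−2β} K_s^{−β}(x,y)]
f(y) dν_β(y)` is of strong type `(1,1)` with respect to `ν_β`. -/
theorem stmt11 (β : ℝ) (hβ : β ≤ -1) :
    ∃ C : ℝ, 0 < C ∧ ∀ f : ℝ → ℝ, (∀ y, 0 ≤ f y) → Integrable f (nu1 β) →
      (∫⁻ x, (∫⁻ y in {y : ℝ | y < x / 2 ∨ 2 * x < y},
          ENNReal.ofReal ((x * y) ^ (-2 * β)) *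
            (⨆ s ∈ Set.Ioc (0 : ℝ) (1 / 4),
              ENNReal.ofReal ((1 - s) ^ (-2 * β) * Kker1 (-β) s x y)) *
            ENNReal.ofReal (f y) ∂(nu1 β)) ∂(nu1 β)) ≤
        ENNReal.ofReal (C * ∫ y, f y ∂(nu1 β)) := by
  set K := (512 * (1 - β)) ^ (1 - β)
  have hK : 0 < K := rpow_pos_of_pos (by linarith) _
  have hS : 0 < 1 / 2 - 1 / (2 * β) := by
    have : 1 / (2 * β) < 0 := one_div_neg.2 (by linarith)
    linarith
  refine ⟨K * (1 / 2 - 1 / (2 * β)), mul_pos hK hS, fun f hf hfi => ?_⟩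
  calc _ ≤ ∫⁻ x, ∫⁻ y, ENNReal.ofReal (K * farMajorant β x y) * ENNReal.ofReal (f y) ∂nu1 β
        ∂nu1 β :=
        lintegral_mono_ae ((ae_nu1_pos β).mono fun x hx => setLIntegral_far_le (by linarith) hx _)
    _ ≤ ENNReal.ofReal (K * (1 / 2 - 1 / (2 * β))) * ∫⁻ y, ENNReal.ofReal (f y) ∂nu1 β := by
        refine lintegral_lintegral_mul_le_of_lintegral_le
          ((measurable_farMajorant β).const_mul K).ennreal_ofReal
          hfi.aemeasurable.ennreal_ofReal ((ae_nu1_pos β).mono fun y hy => ?_)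
        simp_rw [ENNReal.ofReal_mul hK.le]
        rw [lintegral_const_mul' _ _ ENNReal.ofReal_ne_top]
        gcongr
        exact lintegral_farMajorant_le (by linarith) hy
    _ = ENNReal.ofReal (K * (1 / 2 - 1 / (2 * β)) * ∫ y, f y ∂nu1 β) := by
        rw [← ofReal_integral_eq_lintegral_ofReal hfi (ae_of_all _ hf),
          ← ENNReal.ofReal_mul (mul_pos hK hS).le]
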